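/- Let O and I be disjoint finite sets with |I| ≤ 1, let u ≥ 0 and d_max ≥ 0 be real numbers, and let f, d : O ∪ I → ℝ satisfy: f(h) > 0 for all h ∈ O ∪ I; 0 ≤ d(h) ≤ d_max for all h ∈ O ∪ I; f(h) ≥ d(h)/2 for all h ∈ O; and ∑_{h ∈ O ∪ I} f(h) ≤ u. Then ∑_{h ∈ O ∪ I} d(h) ≤ 2·u + d_max. -/
import Mathlib

open Finset

theorem stmt_12 {α : Type*} [DecidableEq α] (O I : Finset α)
    (hdisj : Disjoint O I) (hI : I.card ≤ 1)
    (u dmax : ℝ) (hu : 0 ≤ u) (hdmax : 0 ≤ dmax)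
    (f d : α → ℝ)
    (hfpos : ∀ h ∈ O ∪ I, 0 < f h)
    (hd0 : ∀ h ∈ O ∪ I, 0 ≤ d h)
    (hdmax' : ∀ h ∈ O ∪ I, d h ≤ dmax)
    (hhalf : ∀ h ∈ O, d h / 2 ≤ f h)
    (hcap : ∑ h ∈ O ∪ I, f h ≤ u) :
    ∑ h ∈ O ∪ I, d h ≤ 2 * u + dmax := by
  rw [Finset.sum_union hdisj] at hcap ⊢
  have hO : ∑ h ∈ O, d h ≤ 2 * u := by
    have h1 : ∑ h ∈ O, d h ≤ 2 * ∑ h ∈ O, f h := by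
      rw [Finset.mul_sum]
      refine Finset.sum_le_sum fun h hh => ?_
      linarith [hhalf h hh]
    have h2 : 0 ≤ ∑ h ∈ I, f h :=
      Finset.sum_nonneg fun h hh => (hfpos h (Finset.mem_union_right _ hh)).le
    linarith
  have hIsum : ∑ h ∈ I, d h ≤ dmax := by
    have := Finset.sum_le_card_nsmul I d dmax
      (fun h hh => hdmax' h (Finset.mem_union_right _ hh))
    have hc : (I.card : ℝ) * dmax ≤ 1 * dmax := by
      apply mul_le_mul_of_nonneg_right _ hdmax
      exact_mod_cast hI
    simp only [nsmul_eq_mul] at this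
    linarith
  linarith
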